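/- arXiv:1707.02404 — 2 statements merged into one kernel-verified Lean document; each statement's English description precedes it below -/
import Mathlib

section
/- Let γ generate F_{q^3} over F_q, let T = { c(γ+a)/(γ+b) : a, b ∈ F_q, c ∈ F_q* }, and let U be the complement of T in the nonzero elements of F_{q^3}. Then U = U₁ ∪ U₋₁ where U₁ = { u(γ+v) : u ∈ F_q*, v ∈ F_q } and U₋₁ is the set of inverses of elements of U₁; in particular |U| = 2q(q-1). -/
/-!
Let `L = span_F {1, γ}`. As `γ` has degree 3, no nontrivial relation `a + bγ + cγ² = 0` holds, so
`L` is a plane. For `x ≠ 0` the planes `xL` and `L` of the 3-dimensional space `E` meet, so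
`x = z / y` with `y, z ∈ L \ {0}`. Each of `y, z` is either in `F*` or in `U₁`, and the four cases
put `x` in `T`, `U₁` or `U₁⁻¹`. Conversely, `u(γ+v)(γ+b) = c(γ+a)` and `u(γ+v)·u'(γ+v') = 1` would
be nontrivial quadratic relations for `γ`; hence `U₁`, `U₁⁻¹` and `T` (which is closed under
inversion) are pairwise disjoint, and `(u, v) ↦ u(γ+v)` is injective, so `|U₁| = q(q-1)`.
-/
open Module Set
open scoped Pointwise

theorem Submodule.exists_ne_zero_mul_mem {F E : Type*} [Field F] [Ring E] [IsDomain E]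
    [Algebra F E] [FiniteDimensional F E] (L : Submodule F E)
    (hL : finrank F E < 2 * finrank F L) {x : E} (hx : x ≠ 0) :
    ∃ y ∈ L, y ≠ 0 ∧ x * y ∈ L := by
  set M := L.map (LinearMap.mulLeft F x)
  have hM : finrank F L = finrank F M :=
    (L.equivMapOfInjective _ (mul_right_injective₀ hx)).finrank_eq
  have hsup : finrank F ↥(M ⊔ L) ≤ finrank F E := Submodule.finrank_le _
  have hinf := Submodule.finrank_sup_add_finrank_inf_eq M L
  obtain ⟨w, hw, hw0⟩ : ∃ w ∈ M ⊓ L, w ≠ 0 := by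
    refine Submodule.exists_mem_ne_zero_of_ne_bot fun hbot => ?_
    rw [hbot, finrank_bot] at hinf
    omega
  obtain ⟨⟨y, hy, rfl⟩, hwL⟩ := hw
  exact ⟨y, hy, by rintro rfl; simp at hw0, hwL⟩

theorem Field.natDegree_minpoly_eq_finrank {F E : Type*} [Field F] [Field E] [Algebra F E]
    [FiniteDimensional F E] {γ : E} (hγ : Algebra.adjoin F {γ} = ⊤) :
    (minpoly F γ).natDegree = finrank F E :=
  (Field.primitive_element_iff_minpoly_natDegree_eq F γ).mp
    (IntermediateField.adjoin_eq_top_of_algebra F {γ} hγ)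

section DegreeOneValues

variable (F : Type*) {E : Type*} [Field F] [Field E] [Algebra F E] (γ : E)

local notation "ι" => algebraMap F E

/-- The paper's `U₁`: the values at `γ` of the polynomials of degree one. -/
def degreeOneValues : Set E := {x | ∃ u v : F, u ≠ 0 ∧ x = ι u * (γ + ι v)}

/-- The paper's `T`. -/
def degreeOneRatios : Set E := {x | ∃ a b c : F, c ≠ 0 ∧ x = ι c * (γ + ι a) / (γ + ι b)}

variable {F γ}

open Polynomial in
theorem coeffs_eq_zero_of_quadratic_relation (hγ : 2 < (minpoly F γ).natDegree) {a b c : F}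
    (h : ι a + ι b * γ + ι c * γ ^ 2 = 0) : a = 0 ∧ b = 0 ∧ c = 0 := by
  set p : F[X] := C c * X ^ 2 + C b * X + C a
  have hp : p = 0 := by
    by_contra hp
    have hle : (minpoly F γ).natDegree ≤ 2 := natDegree_le_of_degree_le <|
      (minpoly.degree_le_of_ne_zero F γ hp (by simp [p, ← h]; ring)).trans degree_quadratic_le
    omega
  refine ⟨?_, ?_, ?_⟩
  · simpa [p] using congr_arg (coeff · 0) hp
  · simpa [p] using congr_arg (coeff · 1) hp
  · simpa [p] using congr_arg (coeff · 2) hp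

theorem self_add_algebraMap_ne_zero (hγ : 2 < (minpoly F γ).natDegree) (v : F) :
    γ + ι v ≠ 0 := fun h =>
  one_ne_zero (coeffs_eq_zero_of_quadratic_relation hγ (a := v) (b := 1) (c := 0)
    (by rw [← h]; simp; ring)).2.1

theorem ne_zero_of_mem_degreeOneValues (hγ : 2 < (minpoly F γ).natDegree) {x : E}
    (hx : x ∈ degreeOneValues F γ) : x ≠ 0 := by
  obtain ⟨u, v, hu, rfl⟩ := hx
  exact mul_ne_zero ((map_ne_zero _).mpr hu) (self_add_algebraMap_ne_zero hγ v)

theorem inv_mem_degreeOneRatios {x : E} (hx : x ∈ degreeOneRatios F γ) :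
    x⁻¹ ∈ degreeOneRatios F γ := by
  obtain ⟨a, b, c, hc, rfl⟩ := hx
  exact ⟨b, a, c⁻¹, inv_ne_zero hc, by rw [map_inv₀]; field_simp⟩

theorem notMem_degreeOneRatios_of_mem_degreeOneValues (hγ : 2 < (minpoly F γ).natDegree)
    {x : E} (hx : x ∈ degreeOneValues F γ) : x ∉ degreeOneRatios F γ := by
  rintro ⟨a, b, c, -, hT⟩
  obtain ⟨u, v, hu, rfl⟩ := hx
  rw [eq_div_iff (self_add_algebraMap_ne_zero hγ b)] at hT
  refine hu (coeffs_eq_zero_of_quadratic_relation hγ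
    (a := u * v * b - c * a) (b := u * v + u * b - c) (c := u) ?_).2.2
  simp only [map_sub, map_add, map_mul]
  linear_combination hT

theorem disjoint_degreeOneValues_inv (hγ : 2 < (minpoly F γ).natDegree) :
    Disjoint (degreeOneValues F γ) (degreeOneValues F γ)⁻¹ := by
  refine Set.disjoint_left.mpr fun x hx hx' => ?_
  obtain ⟨u, v, hu, rfl⟩ := hx
  obtain ⟨u', v', hu', hx'⟩ := Set.mem_inv.mp hx'
  have h1 : ι u * (γ + ι v) * (ι u' * (γ + ι v')) = 1 := by
    rw [← hx', mul_inv_cancel₀ (ne_zero_of_mem_degreeOneValues hγ ⟨u, v, hu, rfl⟩)]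
  refine mul_ne_zero hu hu' (coeffs_eq_zero_of_quadratic_relation hγ
    (a := u * u' * v * v' - 1) (b := u * u' * (v + v')) (c := u * u') ?_).2.2
  simp only [map_sub, map_add, map_mul, map_one]
  linear_combination h1

theorem injOn_algebraMap_mul_self_add (hγ : 2 < (minpoly F γ).natDegree) :
    InjOn (fun p : F × F => ι p.1 * (γ + ι p.2)) ({0}ᶜ ×ˢ univ) := by
  rintro ⟨u, v⟩ ⟨hu, -⟩ ⟨u', v'⟩ - h
  obtain ⟨hv, hu', -⟩ := coeffs_eq_zero_of_quadratic_relation hγ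
    (a := u * v - u' * v') (b := u - u') (c := 0)
    (by simp only [map_sub, map_mul, map_zero]; linear_combination h)
  obtain rfl := sub_eq_zero.mp hu'
  rw [sub_eq_zero] at hv
  rw [mul_left_cancel₀ hu hv]

theorem ncard_degreeOneValues [Finite F] (hγ : 2 < (minpoly F γ).natDegree) :
    (degreeOneValues F γ).ncard = (Nat.card F - 1) * Nat.card F := by
  have himage : degreeOneValues F γ =
      (fun p : F × F => ι p.1 * (γ + ι p.2)) '' ({0}ᶜ ×ˢ univ) := by
    ext x
    simp [degreeOneValues, eq_comm]
  rw [himage, (injOn_algebraMap_mul_self_add hγ).ncard_image, ncard_prod,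
    ncard_compl, ncard_singleton, ncard_univ]

theorem finrank_span_pair_one (hγ : 2 < (minpoly F γ).natDegree) :
    finrank F (Submodule.span F {1, γ}) = 2 := by
  have hli : LinearIndependent F ![1, γ] := LinearIndependent.pair_iff.mpr fun s t h => by
    have := coeffs_eq_zero_of_quadratic_relation hγ (a := s) (b := t) (c := 0)
      (by simpa [Algebra.smul_def] using h)
    exact ⟨this.1, this.2.1⟩
  rw [← Matrix.range_cons_cons_empty, finrank_span_eq_card hli, Fintype.card_fin]

theorem eq_algebraMap_or_mem_degreeOneValues_of_mem_span {y : E}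
    (hy : y ∈ Submodule.span F {1, γ}) (hy0 : y ≠ 0) :
    (∃ c : F, c ≠ 0 ∧ y = ι c) ∨ y ∈ degreeOneValues F γ := by
  obtain ⟨s, t, rfl⟩ := Submodule.mem_span_pair.mp hy
  by_cases ht : t = 0
  · subst ht
    refine .inl ⟨s, ?_, by simp [Algebra.smul_def]⟩
    rintro rfl
    simp at hy0
  · refine .inr ⟨t, s / t, ht, ?_⟩
    rw [Algebra.smul_def, Algebra.smul_def, mul_add, ← map_mul, mul_div_cancel₀ _ ht]
    ring

theorem mem_degreeOneRatios_or_mem_degreeOneValues_or_inv_mem [FiniteDimensional F E]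
    (hγ : 2 < (minpoly F γ).natDegree) (hE : finrank F E ≤ 3) {x : E} (hx : x ≠ 0) :
    x ∈ degreeOneRatios F γ ∨ x ∈ degreeOneValues F γ ∨ x⁻¹ ∈ degreeOneValues F γ := by
  obtain ⟨y, hy, hy0, hxy⟩ := (Submodule.span F {1, γ}).exists_ne_zero_mul_mem
    (by rw [finrank_span_pair_one hγ]; omega) hx
  have hx_eq {z : E} (hz : x * y = z) : x = z / y := eq_div_of_mul_eq hy0 hz
  rcases eq_algebraMap_or_mem_degreeOneValues_of_mem_span hy hy0 with
    ⟨c, hc, rfl⟩ | ⟨u, b, hu, rfl⟩ <;>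
  rcases eq_algebraMap_or_mem_degreeOneValues_of_mem_span hxy (mul_ne_zero hx hy0) with
    ⟨c', hc', hz⟩ | ⟨u', a, hu', hz⟩ <;> rw [hx_eq hz]
  · refine .inl ⟨0, 0, c' / c, div_ne_zero hc' hc, ?_⟩
    rw [mul_div_assoc, div_self (self_add_algebraMap_ne_zero hγ 0), mul_one, map_div₀]
  · refine .inr (.inl ⟨u' / c, a, div_ne_zero hu' hc, ?_⟩)
    rw [map_div₀]
    field_simp
  · refine .inr (.inr ⟨u / c', b, div_ne_zero hu hc', ?_⟩)
    rw [map_div₀, inv_div]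
    field_simp
  · refine .inl ⟨a, b, u' / u, div_ne_zero hu' hu, ?_⟩
    rw [map_div₀]
    field_simp

theorem compl_degreeOneRatios [FiniteDimensional F E] (hγ : 2 < (minpoly F γ).natDegree)
    (hE : finrank F E ≤ 3) :
    {x : E | x ≠ 0} \ degreeOneRatios F γ = degreeOneValues F γ ∪ (degreeOneValues F γ)⁻¹ := by
  ext x
  simp only [mem_sdiff, mem_ofPred_eq, mem_union, mem_inv]
  constructor
  · rintro ⟨hx, hxT⟩
    exact (mem_degreeOneRatios_or_mem_degreeOneValues_or_inv_mem hγ hE hx).resolve_left hxT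
  · rintro (hx | hx)
    · exact ⟨ne_zero_of_mem_degreeOneValues hγ hx,
        notMem_degreeOneRatios_of_mem_degreeOneValues hγ hx⟩
    · exact ⟨by simpa using ne_zero_of_mem_degreeOneValues hγ hx, fun hxT =>
        notMem_degreeOneRatios_of_mem_degreeOneValues hγ hx (inv_mem_degreeOneRatios hxT)⟩

theorem setOf_eq_inv_degreeOneValues :
    {x : E | ∃ u v : F, u ≠ 0 ∧ x = (ι u * (γ + ι v))⁻¹} = (degreeOneValues F γ)⁻¹ := by
  ext x
  simp [degreeOneValues, inv_eq_iff_eq_inv]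

end DegreeOneValues

theorem complement_of_T_general
    (q : ℕ) (F E : Type*) [Field F] [Field E] [Algebra F E]
    [Fintype F]
    (hq : Fintype.card F = q)
    (hdeg : Module.finrank F E = 3)
    (γ : E) (hγ : Algebra.adjoin F {γ} = ⊤) :
    {x : E | x ≠ 0} \
        {x : E | ∃ a b c : F, c ≠ 0 ∧
          x = algebraMap F E c * (γ + algebraMap F E a) / (γ + algebraMap F E b)}
      = {x : E | ∃ u v : F, u ≠ 0 ∧ x = algebraMap F E u * (γ + algebraMap F E v)} ∪
        {x : E | ∃ u v : F, u ≠ 0 ∧ x = (algebraMap F E u * (γ + algebraMap F E v))⁻¹} ∧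
    Set.ncard ({x : E | x ≠ 0} \
        {x : E | ∃ a b c : F, c ≠ 0 ∧
          x = algebraMap F E c * (γ + algebraMap F E a) / (γ + algebraMap F E b)})
      = 2 * q * (q - 1) := by
  have : FiniteDimensional F E := Module.finite_of_finrank_eq_succ hdeg
  have : Finite E := Module.finite_of_finite F
  have hγdeg : 2 < (minpoly F γ).natDegree := by
    rw [Field.natDegree_minpoly_eq_finrank hγ, hdeg]
    norm_num
  rw [setOf_eq_inv_degreeOneValues]
  change {x : E | x ≠ 0} \ degreeOneRatios F γ = _ ∧
    ({x : E | x ≠ 0} \ degreeOneRatios F γ).ncard = _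
  rw [compl_degreeOneRatios hγdeg hdeg.le]
  refine ⟨rfl, ?_⟩
  rw [ncard_union_eq (disjoint_degreeOneValues_inv hγdeg),
    ncard_inv, ncard_degreeOneValues hγdeg, Nat.card_eq_fintype_card, hq]
  ring

/-- The complement `U` of `T = { c(γ+a)/(γ+b) }` in the nonzero elements of the
cubic extension `E` of `F` is `U₁ ∪ U₋₁`, where `U₁ = { u(γ+v) : u ≠ 0 }` and
`U₋₁` is the set of inverses of elements of `U₁`; in particular
`|U| = 2q(q-1)`. -/
theorem complement_of_T
    (q : ℕ) (F E : Type*) [Field F] [Field E] [Algebra F E]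
    [Fintype F] [Fintype E]
    (hq : Fintype.card F = q)
    (hdeg : Module.finrank F E = 3)
    (γ : E) (hγ : Algebra.adjoin F {γ} = ⊤) :
    {x : E | x ≠ 0} \
        {x : E | ∃ a b c : F, c ≠ 0 ∧
          x = algebraMap F E c * (γ + algebraMap F E a) / (γ + algebraMap F E b)}
      = {x : E | ∃ u v : F, u ≠ 0 ∧ x = algebraMap F E u * (γ + algebraMap F E v)} ∪
        {x : E | ∃ u v : F, u ≠ 0 ∧ x = (algebraMap F E u * (γ + algebraMap F E v))⁻¹} ∧
    Set.ncard ({x : E | x ≠ 0} \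
        {x : E | ∃ a b c : F, c ≠ 0 ∧
          x = algebraMap F E c * (γ + algebraMap F E a) / (γ + algebraMap F E b)})
      = 2 * q * (q - 1) :=
  complement_of_T_general q F E hq hdeg γ hγ
end

section
/- Let q be a prime power, let β, γ be nonzero elements of F_{q^3} with γ generating F_{q^3} over F_q, and let χ be a nontrivial multiplicative character of F_{q^3} whose order divides q^2+q+1. Then |Σ_{a ∈ F_q} χ(β(γ + a))| ≤ √q + 1. -/
/-!
The order of `χ` divides `(q³ - 1)/(q - 1) = q² + q + 1` and every element of `Fˣ` is a norm from
`E`, so `χ` is trivial on `Fˣ`. Let `V = F + Fγ`, a plane in the `3`-dimensional `F`-space `E`.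
Then `S = ∑_{v ∈ V} χ v = (q - 1) (1 + ∑_a χ (γ + a))`, and expanding `|S|²` counts, for each
`x ∈ E`, the `w ∈ V` with `x w ∈ V`. They form the subspace `V ∩ x⁻¹ V`, which is `V` when
`x ∈ F` and a line otherwise, because `E ⧸ V` is a line and, `1, γ, γ²` being independent,
`x V ⊆ V` forces `x ∈ F`. Orthogonality of `χ` then gives `|S|² = q (q - 1)²`, that is
`|1 + ∑_a χ (γ + a)| = √q`.
-/

namespace MulChar

theorem norm_apply_le_one {R : Type*} [CommRing R] [Finite Rˣ] (χ : MulChar R ℂ) (a : R) :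
    ‖χ a‖ ≤ 1 := by
  cases nonempty_fintype Rˣ
  by_cases ha : IsUnit a
  · obtain ⟨u, rfl⟩ := ha
    exact (Complex.norm_eq_one_of_mem_rootsOfUnity (χ.apply_mem_rootsOfUnity u)).le
  · simp [χ.map_nonunit ha]

theorem apply_algebraMap_eq_one {K L R : Type*} [Field K] [Field L] [Algebra K L] [Finite L]
    [CommMonoidWithZero R] (χ : MulChar L R)
    (hχ : χ ^ ((Nat.card L - 1) / (Nat.card K - 1)) = 1) {c : K} (hc : c ≠ 0) :
    χ (algebraMap K L c) = 1 := by
  obtain ⟨y, rfl⟩ := FiniteField.norm_surjective K L c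
  obtain ⟨u, rfl⟩ : IsUnit y := by
    rw [isUnit_iff_ne_zero]; rintro rfl; simp at hc
  rw [FiniteField.algebraMap_norm_eq_pow, map_pow, ← pow_apply_coe, hχ, one_apply u.isUnit]

open scoped Classical in
theorem sum_apply_mul_inv {E ι : Type*} [Field E] [Fintype E] [Fintype ι] {χ : MulChar E ℂ}
    (hχ : χ ≠ 1) {f : ι → E} (hf : Function.Injective f) {w : E} (hw : w ∈ Set.range f) :
    ∑ i, χ (f i * w⁻¹) = ∑ x, if x * w ∈ Set.range f then χ x else 0 := by
  rcases eq_or_ne w 0 with rfl | hw0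
  · simp [hw, sum_eq_zero_of_ne_one hχ]
  rw [← Equiv.sum_comp (Equiv.mulRight₀ w⁻¹ (inv_ne_zero hw0))]
  refine Fintype.sum_of_injective f hf _ _ (fun y hy => ?_) (fun i => ?_)
  · simp [inv_mul_cancel_right₀ hw0, hy]
  · simp [inv_mul_cancel_right₀ hw0]

open scoped Classical in
theorem norm_sum_apply_sq {E ι : Type*} [Field E] [Fintype E] [Fintype ι] {χ : MulChar E ℂ}
    (hχ : χ ≠ 1) {f : ι → E} (hf : Function.Injective f) :
    (‖∑ i, χ (f i)‖ ^ 2 : ℂ) = ∑ x, χ x * Nat.card {j // x * f j ∈ Set.range f} := by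
  have hconj (a b : E) : χ a * starRingEnd ℂ (χ b) = χ (a * b⁻¹) := by
    rw [← RCLike.star_def, star_apply', inv_apply', map_mul]
  rw [← Complex.mul_conj', map_sum, Finset.sum_mul_sum, Finset.sum_comm]
  simp_rw [hconj, sum_apply_mul_inv hχ hf (Set.mem_range_self _)]
  rw [Finset.sum_comm]
  refine Finset.sum_congr rfl fun x _ => ?_
  rw [Finset.sum_ite, Finset.sum_const_zero, add_zero, Finset.sum_const, nsmul_eq_mul, mul_comm,
    Nat.card_eq_fintype_card, Fintype.card_subtype]

end MulChar

open Module

section Plane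

variable {F E : Type*} [Field F] [Field E] [Algebra F E]

theorem linearIndependent_pow_of_adjoin_eq_top [FiniteDimensional F E] {γ : E}
    (hγ : Algebra.adjoin F {γ} = ⊤) :
    LinearIndependent F fun i : Fin (finrank F E) => γ ^ (i : ℕ) := by
  have hdeg : (minpoly F γ).natDegree = finrank F E :=
    (Field.primitive_element_iff_minpoly_natDegree_eq F γ).mp
      ((IntermediateField.adjoin_simple_eq_top_iff_of_isAlgebraic
        (Algebra.IsAlgebraic.isAlgebraic γ)).mpr hγ)
  exact hdeg ▸ linearIndependent_pow γ

variable (F) in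
def planeMap (γ : E) : F × F →ₗ[F] E :=
  (Algebra.linearMap F E).coprod (LinearMap.toSpanSingleton F E γ)

@[simp]
theorem planeMap_apply (γ : E) (p : F × F) :
    planeMap F γ p = algebraMap F E p.1 + p.2 • γ := rfl

variable {γ : E} (hγ : LinearIndependent F fun i : Fin 3 => γ ^ (i : ℕ))
include hγ

theorem planeMap_injective : Function.Injective (planeMap F γ) := by
  refine (injective_iff_map_eq_zero _).mpr fun ⟨u, v⟩ h => ?_
  have hcoeff := Fintype.linearIndependent_iff.mp hγ ![u, v, 0]
    (by simpa [Fin.sum_univ_three, Algebra.smul_def] using h)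
  exact Prod.ext (by simpa using hcoeff 0) (by simpa using hcoeff 1)

theorem mem_range_algebraMap_of_mul_planeMap_mem {x : E}
    (hx : ∀ p, x * planeMap F γ p ∈ Set.range (planeMap F γ)) :
    x ∈ Set.range (algebraMap F E) := by
  obtain ⟨⟨u, v⟩, hx₁⟩ := hx (1, 0)
  obtain ⟨⟨u', v'⟩, hxγ⟩ := hx (0, 1)
  simp only [planeMap_apply, Algebra.smul_def, map_one, map_zero, one_mul, zero_add] at hx₁ hxγ
  have hrel : algebraMap F E (-u') + algebraMap F E (u - v') * γ + algebraMap F E v * γ ^ 2 = 0 := by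
    rw [map_neg, map_sub]
    linear_combination γ * hx₁ - hxγ
  have hcoeff := Fintype.linearIndependent_iff.mp hγ ![-u', u - v', v]
    (by simpa [Fin.sum_univ_three, Algebra.smul_def] using hrel)
  have hv : v = 0 := by simpa using hcoeff 2
  exact ⟨u, by simpa [hv] using hx₁⟩

open scoped Classical in
theorem natCard_mul_planeMap_mem [Fintype F] (hdeg : finrank F E = 3) (x : E) :
    Nat.card {p : F × F // x * planeMap F γ p ∈ Set.range (planeMap F γ)} =
      if x ∈ Set.range (algebraMap F E) then Fintype.card F ^ 2 else Fintype.card F := by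
  set V := LinearMap.range (planeMap F γ)
  set ψ := V.mkQ ∘ₗ LinearMap.mulLeft F x ∘ₗ planeMap F γ
  have hker (p : F × F) : p ∈ LinearMap.ker ψ ↔ x * planeMap F γ p ∈ Set.range (planeMap F γ) := by
    simp [ψ, V, Submodule.Quotient.mk_eq_zero]
  rw [Nat.card_congr (Equiv.subtypeEquivRight fun p => (hker p).symm),
    Module.natCard_eq_pow_finrank (K := F), Nat.card_eq_fintype_card]
  have hrank_plane : finrank F (F × F) = 2 := by simp
  split_ifs with hxF
  · obtain ⟨c, rfl⟩ := hxF
    have hker_top : LinearMap.ker ψ = ⊤ := by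
      refine Submodule.eq_top_iff'.mpr fun p => (hker p).mpr ⟨c • p, ?_⟩
      rw [map_smul, Algebra.smul_def]
    rw [hker_top, finrank_top, hrank_plane]
  · have : Module.Finite F E := Module.finite_of_finrank_eq_succ hdeg
    have hker_ne : LinearMap.ker ψ ≠ ⊤ := fun htop => hxF <|
      mem_range_algebraMap_of_mul_planeMap_mem hγ fun p => (hker p).mp (htop ▸ trivial)
    have hrank_quot : finrank F (E ⧸ V) = 1 := by
      have := Submodule.finrank_quotient_add_finrank V
      rw [LinearMap.finrank_range_of_inj (planeMap_injective hγ), hrank_plane, hdeg] at this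
      omega
    have hrank_range := (LinearMap.range ψ).finrank_le
    have := LinearMap.finrank_range_add_finrank_ker ψ
    have := Submodule.finrank_lt hker_ne
    rw [show finrank F (LinearMap.ker ψ) = 1 by omega, pow_one]

end Plane

section CharacterSums

variable {F E : Type*} [Field F] [Field E] [Algebra F E] [Fintype F]
  {χ : MulChar E ℂ} (hχF : ∀ c : F, c ≠ 0 → χ (algebraMap F E c) = 1)
include hχF

theorem sum_apply_algebraMap : ∑ c : F, χ (algebraMap F E c) = Fintype.card F - 1 := by
  classical
  have hone (c : F) : χ (algebraMap F E c) = (1 : MulChar F ℂ) c := by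
    rcases eq_or_ne c 0 with rfl | hc
    · simp [MulChar.map_zero]
    · rw [hχF c hc, MulChar.one_apply (isUnit_iff_ne_zero.mpr hc)]
  simp_rw [hone, MulChar.sum_one_eq_card_units, Fintype.card_units]
  rw [Nat.cast_sub Fintype.card_pos, Nat.cast_one]

theorem sum_planeMap (γ : E) :
    ∑ p, χ (planeMap F γ p) = (Fintype.card F - 1) * (1 + ∑ a : F, χ (γ + algebraMap F E a)) := by
  classical
  have hline (v : F) : ∑ u : F, χ (planeMap F γ (u, v)) =
      χ (algebraMap F E v) * ∑ a : F, χ (γ + algebraMap F E a) +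
        if v = 0 then (Fintype.card F - 1 : ℂ) else 0 := by
    rcases eq_or_ne v 0 with rfl | hv
    · simp [MulChar.map_zero, sum_apply_algebraMap hχF]
    rw [if_neg hv, add_zero, Finset.mul_sum, ← Equiv.sum_comp (Equiv.mulLeft₀ v hv)]
    refine Finset.sum_congr rfl fun a _ => ?_
    rw [← map_mul]
    congr 1
    simp only [planeMap_apply, Equiv.mulLeft₀_apply, map_mul, Algebra.smul_def]
    ring
  rw [Fintype.sum_prod_type_right]
  simp_rw [hline]
  rw [Finset.sum_add_distrib, ← Finset.sum_mul, sum_apply_algebraMap hχF, Finset.sum_ite_eq']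
  simp only [Finset.mem_univ, if_true]
  ring

variable [Fintype E] (hχ : χ ≠ 1) {γ : E} (hγ : LinearIndependent F fun i : Fin 3 => γ ^ (i : ℕ))
  (hdeg : Module.finrank F E = 3)
include hχ hγ hdeg

theorem sum_mul_natCard_mul_planeMap_mem :
    ∑ x, χ x * Nat.card {p : F × F // x * planeMap F γ p ∈ Set.range (planeMap F γ)} =
      (Fintype.card F : ℂ) * (Fintype.card F - 1) ^ 2 := by
  classical
  set q := Fintype.card F
  have hterm (x : E) : χ x * Nat.card {p : F × F // x * planeMap F γ p ∈ Set.range (planeMap F γ)}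
      = q * χ x + (q ^ 2 - q) * if x ∈ Set.range (algebraMap F E) then χ x else 0 := by
    rw [natCard_mul_planeMap_mem hγ hdeg]
    split_ifs <;> push_cast <;> ring
  have hsubfield : ∑ x, (if x ∈ Set.range (algebraMap F E) then χ x else 0) = q - 1 := by
    rw [← sum_apply_algebraMap hχF]
    refine (Fintype.sum_of_injective (algebraMap F E) (algebraMap F E).injective
      (fun c => χ (algebraMap F E c)) _ (fun x hx => if_neg hx) fun c => ?_).symm
    exact (if_pos ⟨c, rfl⟩).symm
  simp_rw [hterm]
  rw [Finset.sum_add_distrib, ← Finset.mul_sum, ← Finset.mul_sum, MulChar.sum_eq_zero_of_ne_one hχ,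
    hsubfield]
  ring

theorem norm_one_add_sum_eq_sqrt :
    ‖1 + ∑ a : F, χ (γ + algebraMap F E a)‖ = Real.sqrt (Fintype.card F) := by
  set q := Fintype.card F
  have hq : (1 : ℝ) < q := by exact_mod_cast Fintype.one_lt_card
  have key := MulChar.norm_sum_apply_sq hχ (planeMap_injective hγ)
  rw [sum_mul_natCard_mul_planeMap_mem hχF hχ hγ hdeg, sum_planeMap hχF, norm_mul,
    show (q : ℂ) - 1 = ((q - 1 : ℝ) : ℂ) by push_cast; rfl,
    Complex.norm_of_nonneg (by linarith)] at key
  have hsq : ‖1 + ∑ a : F, χ (γ + algebraMap F E a)‖ ^ 2 = q := by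
    have key' : ‖1 + ∑ a : F, χ (γ + algebraMap F E a)‖ ^ 2 * (q - 1) ^ 2 = q * (q - 1) ^ 2 := by
      rw [← mul_pow, mul_comm]; exact_mod_cast key
    exact mul_right_cancel₀ (pow_ne_zero 2 (by linarith)) key'
  rw [← hsq, Real.sqrt_sq (norm_nonneg _)]

end CharacterSums

theorem improved_katz_cubic_general
    (q : ℕ) (F E : Type*) [Field F] [Field E] [Algebra F E]
    [Fintype F] [Fintype E]
    (hq : Fintype.card F = q)
    (hdeg : Module.finrank F E = 3)
    (β γ : E) (hγ : Algebra.adjoin F {γ} = ⊤)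
    (χ : MulChar E ℂ) (hχ₁ : χ ≠ 1) (hχ : χ ^ (q ^ 2 + q + 1) = 1) :
    ‖∑ a : F, χ (β * (γ + algebraMap F E a))‖ ≤ Real.sqrt q + 1 := by
  have hq₂ : 2 ≤ q := hq ▸ Fintype.one_lt_card
  have hindex : (Nat.card E - 1) / (Nat.card F - 1) = q ^ 2 + q + 1 := by
    rw [Module.natCard_eq_pow_finrank (K := F), hdeg, Nat.card_eq_fintype_card, hq,
      ← Nat.geomSum_eq hq₂]
    simp only [Finset.sum_range_succ, Finset.sum_range_zero]
    ring
  have hχF (c : F) (hc : c ≠ 0) : χ (algebraMap F E c) = 1 :=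
    χ.apply_algebraMap_eq_one (hindex ▸ hχ) hc
  have hγ₃ := hdeg ▸ linearIndependent_pow_of_adjoin_eq_top hγ
  have hT := norm_one_add_sum_eq_sqrt hχF hχ₁ hγ₃ hdeg
  calc ‖∑ a : F, χ (β * (γ + algebraMap F E a))‖
      = ‖χ β‖ * ‖∑ a : F, χ (γ + algebraMap F E a)‖ := by
        simp_rw [map_mul, ← Finset.mul_sum, norm_mul]
    _ ≤ ‖∑ a : F, χ (γ + algebraMap F E a)‖ :=
        mul_le_of_le_one_left (norm_nonneg _) (χ.norm_apply_le_one β)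
    _ ≤ ‖1 + ∑ a : F, χ (γ + algebraMap F E a)‖ + 1 := by
        simpa using norm_sub_le (1 + ∑ a : F, χ (γ + algebraMap F E a)) 1
    _ = Real.sqrt q + 1 := by rw [hT, hq]

/-- Improved Katz bound for cubic extensions: if `γ` generates the cubic
extension `E` of `F` (`|F| = q`), `β ≠ 0`, and `χ` is a nontrivial
multiplicative character of `E` whose order divides `q² + q + 1`, then
`|Σ_{a ∈ F} χ(β(γ + a))| ≤ √q + 1`. -/
theorem improved_katz_cubic
    (q : ℕ) (F E : Type*) [Field F] [Field E] [Algebra F E]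
    [Fintype F] [Fintype E]
    (hq : Fintype.card F = q)
    (hdeg : Module.finrank F E = 3)
    (β γ : E) (hβ : β ≠ 0) (hγ : Algebra.adjoin F {γ} = ⊤)
    (χ : MulChar E ℂ) (hχ₁ : χ ≠ 1) (hχ : χ ^ (q ^ 2 + q + 1) = 1) :
    ‖∑ a : F, χ (β * (γ + algebraMap F E a))‖ ≤ Real.sqrt q + 1 :=
  improved_katz_cubic_general q F E hq hdeg β γ hγ χ hχ₁ hχ
end
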